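/- arXiv:2502.06022 — 3 statements merged into one kernel-verified Lean document; each statement's English description precedes it below -/
import Mathlib

section
/- Let L ∈ ℝ^{n×n} be symmetric with eigenvalues λ_1 ≥ ... ≥ λ_n and orthonormal eigenvectors v_1, ..., v_n, and let 0 < q_1 < ... < q_d < n be a signature. Then for every flag S_1 ⊆ ... ⊆ S_d of ℝ^n with dim S_k = q_k, one has Σ_{k=1}^d tr(Π_{S_k} L) ≥ Σ_{k=1}^d Σ_{j=1}^{q_k} λ_{n+1−j}, and equality holds for the flag of nested eigenspaces associated with the smallest eigenvalues, S_k* = span(v_n, v_{n−1}, ..., v_{n−q_k+1}). In particular, the flag-tricked sparse spectral clustering problem with β = 0 is solved by the flag of nested eigenspaces of L for increasing eigenvalues. -/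
open Matrix Finset

/-- The squared Frobenius norm of a real matrix. -/
noncomputable def frobSq {p n : ℕ} (M : Matrix (Fin p) (Fin n) ℝ) : ℝ :=
  Matrix.trace (Mᵀ * M)

/-- `P k`, for `k = 1, …, d`, are the orthogonal projection matrices onto a flag
`S_1 ⊆ ⋯ ⊆ S_d` of subspaces of `ℝ^p` with `dim S_k = q k`: each `P k` is a symmetric
idempotent of rank `q k`, and nestedness is `P l * P k = P k` for `k ≤ l`. -/
def IsProjFlag (p d : ℕ) (q : ℕ → ℕ) (P : ℕ → Matrix (Fin p) (Fin p) ℝ) : Prop :=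
  (∀ k, 1 ≤ k → k ≤ d → (P k).IsSymm) ∧
  (∀ k, 1 ≤ k → k ≤ d → P k * P k = P k) ∧
  (∀ k, 1 ≤ k → k ≤ d → (P k).rank = q k) ∧
  (∀ k l, 1 ≤ k → k ≤ l → l ≤ d → P l * P k = P k)

/-- Outer product `u_j u_jᵀ` of the `j`-th column of `U`. -/
noncomputable def colOuter {p : ℕ} (U : Matrix (Fin p) (Fin p) ℝ) (j : Fin p) :
    Matrix (Fin p) (Fin p) ℝ :=
  Matrix.vecMulVec (fun i => U i j) (fun i => U i j)

/-- Orthogonal projection matrix onto the span of the first `m` columns of `V`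
(for `V` with orthonormal columns, this is `∑_{j ≤ m} v_j v_jᵀ`). -/
noncomputable def leadProj {p : ℕ} (V : Matrix (Fin p) (Fin p) ℝ) (m : ℕ) :
    Matrix (Fin p) (Fin p) ℝ :=
  ∑ j ∈ Finset.univ.filter (fun j : Fin p => (j : ℕ) < m), colOuter V j

/-- Orthogonal projection matrix onto the span of the last `m` columns of `V`. -/
noncomputable def tailProj {n : ℕ} (V : Matrix (Fin n) (Fin n) ℝ) (m : ℕ) :
    Matrix (Fin n) (Fin n) ℝ :=
  ∑ j ∈ Finset.univ.filter (fun j : Fin n => n - m ≤ (j : ℕ)), colOuter V j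


section Aux

lemma trace_eq_rank_of_idem {n : ℕ} (P : Matrix (Fin n) (Fin n) ℝ) (h : P * P = P) :
    Matrix.trace P = (P.rank : ℝ) := by
  have hproj : LinearMap.IsProj (LinearMap.range P.mulVecLin) P.mulVecLin :=
    ⟨fun x => LinearMap.mem_range_self _ x, by
      rintro x ⟨y, rfl⟩
      simp only [Matrix.mulVecLin_apply, Matrix.mulVec_mulVec, h]⟩
  have ht := hproj.trace
  rw [LinearMap.trace_eq_matrix_trace ℝ (Pi.basisFun ℝ (Fin n)),
      LinearMap.toMatrix_eq_toMatrix', ← Matrix.toLin'_apply', LinearMap.toMatrix'_toLin'] at ht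
  rw [ht]; rfl

lemma trace_mul_diagonal' {n : ℕ} (M : Matrix (Fin n) (Fin n) ℝ) (ℓ : Fin n → ℝ) :
    Matrix.trace (M * Matrix.diagonal ℓ) = ∑ j, M j j * ℓ j := by
  simp [Matrix.trace, Matrix.diag, Matrix.mul_diagonal]

lemma diag_conj_nonneg {n : ℕ} (P V : Matrix (Fin n) (Fin n) ℝ)
    (hs : P.IsSymm) (hi : P * P = P) (j : Fin n) :
    0 ≤ (Vᵀ * P * V) j j := by
  have h1 : (P * V)ᵀ * (P * V) = Vᵀ * P * V := by
    rw [Matrix.transpose_mul, hs.eq, Matrix.mul_assoc, ← Matrix.mul_assoc P P V, hi,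
      ← Matrix.mul_assoc]
  rw [← h1, Matrix.mul_apply]
  exact Finset.sum_nonneg fun i _ => by
    simp only [Matrix.transpose_apply]; exact mul_self_nonneg _

lemma sum_indicator_eq {n m : ℕ} (hmn : m ≤ n) :
    ∑ j : Fin n, (if n - m ≤ (j : ℕ) then (1:ℝ) else 0) = m := by
  rw [Fin.sum_univ_eq_sum_range (fun i => if n - m ≤ i then (1:ℝ) else 0),
    Finset.range_eq_Ico, ← Finset.sum_Ico_consecutive _ (Nat.zero_le (n - m)) (Nat.sub_le n m)]
  rw [Finset.sum_congr rfl (fun i hi => if_neg (by simp at hi; omega)),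
    Finset.sum_congr rfl (g := fun _ => (1:ℝ)) (fun i hi => if_pos (by simp at hi; omega))]
  simp only [Finset.sum_const, Nat.card_Ico, nsmul_eq_mul, mul_one, Finset.sum_const_zero,
    zero_add]
  have h2 : n - (n - m) = m := by omega
  rw [h2]; ring

lemma scalar_ineq {n m : ℕ} (hm : 0 < m) (hmn : m < n) (ℓ t : Fin n → ℝ)
    (hsort : ∀ i j : Fin n, i ≤ j → ℓ j ≤ ℓ i)
    (ht0 : ∀ j, 0 ≤ t j) (ht1 : ∀ j, t j ≤ 1)
    (hsum : ∑ j, t j = m) :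
    ∑ j ∈ Finset.univ.filter (fun j : Fin n => n - m ≤ (j : ℕ)), ℓ j ≤ ∑ j, ℓ j * t j := by
  have hlt : n - m < n := by omega
  set c := ℓ ⟨n - m, hlt⟩ with hc
  set χ : Fin n → ℝ := fun j => if n - m ≤ (j : ℕ) then (1:ℝ) else 0 with hχ
  have h1 : ∀ j : Fin n, 0 ≤ (ℓ j - c) * (t j - χ j) := by
    intro j
    by_cases hj : n - m ≤ (j : ℕ)
    · have hle : ℓ j ≤ c := hsort ⟨n - m, hlt⟩ j (by simpa [Fin.le_def] using hj)
      have := ht1 j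
      simp only [hχ, if_pos hj]
      nlinarith
    · have hle : c ≤ ℓ j := hsort j ⟨n - m, hlt⟩ (by simp [Fin.le_def]; omega)
      have := ht0 j
      simp only [hχ, if_neg hj]
      nlinarith
  have hsum2 : ∑ j, χ j = m := sum_indicator_eq hmn.le
  have hexp : ∑ j, (ℓ j - c) * (t j - χ j)
      = ∑ j, ℓ j * t j - ∑ j, ℓ j * χ j - c * (∑ j, t j) + c * (∑ j, χ j) := by
    rw [Finset.mul_sum, Finset.mul_sum, ← Finset.sum_sub_distrib, ← Finset.sum_sub_distrib,
      ← Finset.sum_add_distrib]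
    exact Finset.sum_congr rfl fun j _ => by ring
  have hpos : 0 ≤ ∑ j, (ℓ j - c) * (t j - χ j) := Finset.sum_nonneg fun j _ => h1 j
  have hfilter : ∑ j ∈ Finset.univ.filter (fun j : Fin n => n - m ≤ (j : ℕ)), ℓ j
      = ∑ j, ℓ j * χ j := by
    rw [Finset.sum_filter]
    refine Finset.sum_congr rfl fun j _ => ?_
    show (if n - m ≤ (j:ℕ) then ℓ j else 0) = ℓ j * (if n - m ≤ (j:ℕ) then (1:ℝ) else 0)
    by_cases hj : n - m ≤ (j:ℕ)
    · rw [if_pos hj, if_pos hj, mul_one]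
    · rw [if_neg hj, if_neg hj, mul_zero]
  rw [hfilter]
  rw [hexp, hsum, hsum2] at hpos
  linarith

lemma key_ineq {n m : ℕ} (hm : 0 < m) (hmn : m < n)
    (ℓ : Fin n → ℝ) (V P : Matrix (Fin n) (Fin n) ℝ)
    (hV : Vᵀ * V = 1)
    (hsort : ∀ i j : Fin n, i ≤ j → ℓ j ≤ ℓ i)
    (hs : P.IsSymm) (hi : P * P = P) (hr : P.rank = m) :
    ∑ j ∈ Finset.univ.filter (fun j : Fin n => n - m ≤ (j : ℕ)), ℓ j
      ≤ Matrix.trace (P * (V * Matrix.diagonal ℓ * Vᵀ)) := by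
  have hVVt : V * Vᵀ = 1 := mul_eq_one_comm.mp hV
  set t : Fin n → ℝ := fun j => (Vᵀ * P * V) j j with htdef
  have hassoc : Vᵀ * (P * V) = Vᵀ * P * V := by rw [Matrix.mul_assoc]
  have htr : Matrix.trace (P * (V * Matrix.diagonal ℓ * Vᵀ)) = ∑ j, ℓ j * t j := by
    have h2 : P * (V * Matrix.diagonal ℓ * Vᵀ) = P * V * Matrix.diagonal ℓ * Vᵀ := by
      simp only [Matrix.mul_assoc]
    rw [h2, Matrix.trace_mul_cycle, ← Matrix.mul_assoc, trace_mul_diagonal']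
    exact Finset.sum_congr rfl fun j _ => mul_comm _ _
  have ht0 : ∀ j, 0 ≤ t j := fun j => diag_conj_nonneg P V hs hi j
  have ht1 : ∀ j, t j ≤ 1 := by
    intro j
    have hQs : (1 - P).IsSymm := by
      unfold Matrix.IsSymm
      rw [Matrix.transpose_sub, Matrix.transpose_one, hs.eq]
    have hQi : (1 - P) * (1 - P) = 1 - P := by
      simp only [Matrix.sub_mul, Matrix.mul_sub, Matrix.one_mul, Matrix.mul_one, hi]
      abel
    have h3 := diag_conj_nonneg (1 - P) V hQs hQi j
    have h4 : Vᵀ * (1 - P) * V = 1 - Vᵀ * P * V := by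
      rw [Matrix.mul_sub, Matrix.mul_one, Matrix.sub_mul, hV]
    rw [h4, Matrix.sub_apply, Matrix.one_apply_eq] at h3
    have : t j = (Vᵀ * P * V) j j := rfl
    linarith
  have hsum : ∑ j, t j = m := by
    have h5 : ∑ j, t j = Matrix.trace (Vᵀ * P * V) := by
      simp [Matrix.trace, Matrix.diag, htdef]
    rw [h5, Matrix.trace_mul_cycle, hVVt, Matrix.one_mul, trace_eq_rank_of_idem P hi, hr]
  rw [htr]
  exact scalar_ineq hm hmn ℓ t hsort ht0 ht1 hsum

lemma tailProj_eq' {n : ℕ} (V : Matrix (Fin n) (Fin n) ℝ) (m : ℕ) :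
    tailProj V m
      = V * Matrix.diagonal (fun j : Fin n => if n - m ≤ (j : ℕ) then (1:ℝ) else 0) * Vᵀ := by
  ext i k
  rw [tailProj, Matrix.sum_apply, Finset.sum_filter, Matrix.mul_apply]
  refine Finset.sum_congr rfl fun b _ => ?_
  simp only [colOuter, Matrix.vecMulVec_apply, Matrix.mul_diagonal, Matrix.transpose_apply]
  by_cases hb : n - m ≤ (b : ℕ) <;> simp [hb]

lemma key_eq {n : ℕ} (m : ℕ) (ℓ : Fin n → ℝ) (V : Matrix (Fin n) (Fin n) ℝ)
    (hV : Vᵀ * V = 1) :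
    Matrix.trace (tailProj V m * (V * Matrix.diagonal ℓ * Vᵀ))
      = ∑ j ∈ Finset.univ.filter (fun j : Fin n => n - m ≤ (j : ℕ)), ℓ j := by
  set χ : Fin n → ℝ := fun j => if n - m ≤ (j : ℕ) then (1:ℝ) else 0 with hχ
  have h1 : tailProj V m * (V * Matrix.diagonal ℓ * Vᵀ)
      = V * (Matrix.diagonal χ * Matrix.diagonal ℓ) * Vᵀ := by
    rw [tailProj_eq']
    calc V * Matrix.diagonal χ * Vᵀ * (V * Matrix.diagonal ℓ * Vᵀ)
        = V * Matrix.diagonal χ * (Vᵀ * V) * Matrix.diagonal ℓ * Vᵀ := by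
          simp only [Matrix.mul_assoc]
      _ = V * (Matrix.diagonal χ * Matrix.diagonal ℓ) * Vᵀ := by
          rw [hV, Matrix.mul_one]; simp only [Matrix.mul_assoc]
  rw [h1, Matrix.trace_mul_cycle, ← Matrix.mul_assoc, hV, Matrix.one_mul,
    Matrix.diagonal_mul_diagonal, Matrix.trace_diagonal, Finset.sum_filter]
  refine Finset.sum_congr rfl fun j _ => ?_
  show (if n - m ≤ (j:ℕ) then (1:ℝ) else 0) * ℓ j = (if n - m ≤ (j:ℕ) then ℓ j else 0)
  by_cases hj : n - m ≤ (j:ℕ)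
  · rw [if_pos hj, if_pos hj, one_mul]
  · rw [if_neg hj, if_neg hj, zero_mul]

end Aux

/-- for a symmetric `L` with sorted eigendecomposition
`L = V diag(λ) Vᵀ`, every flag of signature `(n, q_{1:d})` satisfies
`∑ₖ tr(Π_{S_k} L) ≥ ∑ₖ ∑_{j=1}^{q_k} λ_{n+1−j}`, with equality for the flag of nested
eigenspaces associated with the smallest eigenvalues,
`S_k* = span(v_n, …, v_{n−q_k+1})` (so the flag-tricked sparse spectral clustering
problem with `β = 0` is solved by the flag of eigenvectors of `L` for increasing
eigenvalues). -/
theorem flag_ky_fan_min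
    {n d : ℕ} (hd : 1 ≤ d)
    (q : ℕ → ℕ) (hq1 : 0 < q 1)
    (hmono : ∀ k, 1 ≤ k → k < d → q k < q (k + 1)) (hqd : q d < n)
    (L : Matrix (Fin n) (Fin n) ℝ)
    (ℓ : Fin n → ℝ) (V : Matrix (Fin n) (Fin n) ℝ)
    (hV : Vᵀ * V = 1)
    (hsort : ∀ i j : Fin n, i ≤ j → ℓ j ≤ ℓ i)
    (hL : L = V * Matrix.diagonal ℓ * Vᵀ)
    (P : ℕ → Matrix (Fin n) (Fin n) ℝ)
    (hP : IsProjFlag n d q P) :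
    (∑ k ∈ Finset.Icc 1 d, Matrix.trace (P k * L)
        ≥ ∑ k ∈ Finset.Icc 1 d,
            ∑ j ∈ Finset.univ.filter (fun j : Fin n => n - q k ≤ (j : ℕ)), ℓ j) ∧
      ∑ k ∈ Finset.Icc 1 d, Matrix.trace (tailProj V (q k) * L)
        = ∑ k ∈ Finset.Icc 1 d,
            ∑ j ∈ Finset.univ.filter (fun j : Fin n => n - q k ≤ (j : ℕ)), ℓ j := by
  obtain ⟨hsymm, hidem, hrank, _⟩ := hP
  have hqmono : ∀ a b : ℕ, 1 ≤ a → a ≤ b → b ≤ d → q a ≤ q b := by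
    intro a b ha hab hbd
    induction b with
    | zero => omega
    | succ b ih =>
      rcases Nat.eq_or_lt_of_le hab with h | h
      · rw [h]
      · have h1 : q a ≤ q b := ih (by omega) (by omega)
        have h2 : q b < q (b + 1) := hmono b (by omega) (by omega)
        omega
  have hqbounds : ∀ k, k ∈ Finset.Icc 1 d → 0 < q k ∧ q k < n := by
    intro k hk
    rw [Finset.mem_Icc] at hk
    exact ⟨lt_of_lt_of_le hq1 (hqmono 1 k le_rfl hk.1 hk.2),
      lt_of_le_of_lt (hqmono k d hk.1 hk.2 le_rfl) hqd⟩
  constructor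
  · rw [ge_iff_le]
    refine Finset.sum_le_sum fun k hk => ?_
    obtain ⟨hk1, hk2⟩ := hqbounds k hk
    rw [Finset.mem_Icc] at hk
    rw [hL]
    exact key_ineq hk1 hk2 ℓ V (P k) hV hsort (hsymm k hk.1 hk.2) (hidem k hk.1 hk.2)
      (hrank k hk.1 hk.2)
  · refine Finset.sum_congr rfl fun k _ => ?_
    rw [hL]
    exact key_eq (q k) ℓ V hV
end

section
/- Let A, B ∈ ℝ^{p×p} be symmetric positive semidefinite with rank(B) > p − q_d, let 0 < q_1 < ... < q_d < p be a signature, and suppose ρ* ∈ ℝ satisfies Σ_{k=1}^d Σ_{j=1}^{q_k} λ_j(A − ρ* B) = 0, where λ_1(M) ≥ ... ≥ λ_p(M) are the decreasingly sorted eigenvalues of a symmetric matrix M. Then for every flag S_1 ⊆ ... ⊆ S_d of ℝ^p with dim S_k = q_k, one has Σ_{k=1}^d tr(Π_{S_k} A) ≤ ρ* · Σ_{k=1}^d tr(Π_{S_k} B), and equality holds for the eigenflag of A − ρ* B, i.e., for S_k* = span(w_1, ..., w_{q_k}) where w_1, ..., w_p are orthonormal eigenvectors of A − ρ* B ordered by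 decreasing eigenvalue. Consequently, ρ* is the maximum of the flag trace ratio Σ_k tr(Π_{S_k} A) / Σ_k tr(Π_{S_k} B) over all such flags, attained at the eigenflag of A − ρ* B. -/
open Matrix Finset

/-- The trace of a real symmetric idempotent matrix equals its rank. -/
lemma trace_eq_rank_of_symm_idem {p : ℕ} (P : Matrix (Fin p) (Fin p) ℝ)
    (hs : P.IsSymm) (hi : P * P = P) : Matrix.trace P = (P.rank : ℝ) := by
  have hH : P.IsHermitian := by
    rwa [Matrix.IsHermitian, Matrix.conjTranspose_eq_transpose_of_trivial]
  have hD := hH.conjStarAlgAut_star_eigenvectorUnitary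
  rw [Unitary.conjStarAlgAut_star_apply] at hD
  set U : Matrix (Fin p) (Fin p) ℝ := (hH.eigenvectorUnitary : Matrix (Fin p) (Fin p) ℝ) with hU
  have hUU : star U * U = 1 := Unitary.coe_star_mul_self _
  have hUU' : U * star U = 1 := Unitary.coe_mul_star_self _
  have hsq : ∀ i, hH.eigenvalues i * hH.eigenvalues i = hH.eigenvalues i := by
    intro i
    have h2 : (star U * P * U) * (star U * P * U) = star U * P * U := by
      calc (star U * P * U) * (star U * P * U)
          = star U * (P * ((U * star U) * (P * U))) := by simp only [Matrix.mul_assoc]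
        _ = star U * (P * (P * U)) := by rw [hUU', Matrix.one_mul]
        _ = star U * ((P * P) * U) := by simp only [Matrix.mul_assoc]
        _ = star U * P * U := by rw [hi, Matrix.mul_assoc]
    rw [hD] at h2
    have := congr_fun (congr_fun h2 i) i
    simpa [Matrix.diagonal_mul_diagonal, Matrix.diagonal_apply_eq] using this
  have htr : Matrix.trace P = ∑ i, hH.eigenvalues i := by
    conv_lhs => rw [hH.spectral_theorem, Unitary.conjStarAlgAut_apply]
    rw [Matrix.trace_mul_comm, ← Matrix.mul_assoc, hUU, Matrix.one_mul,
      Matrix.trace_diagonal]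
    simp
  rw [htr, hH.rank_eq_card_non_zero_eigs, Fintype.card_subtype]
  have he : ∀ i, hH.eigenvalues i = if hH.eigenvalues i ≠ 0 then (1:ℝ) else 0 := by
    intro i
    by_cases h : hH.eigenvalues i = 0
    · simp [h]
    · have hfac : hH.eigenvalues i * (hH.eigenvalues i - 1) = 0 := by nlinarith [hsq i]
      rcases mul_eq_zero.mp hfac with h0 | h1
      · exact absurd h0 h
      · have : hH.eigenvalues i = 1 := by linarith
        simp [h, this]
  rw [Finset.sum_congr rfl fun i _ => he i, Finset.sum_boole]

/-- Diagonal entries of `Wᵀ Q W` are nonnegative when `Q` is a symmetric idempotent. -/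
lemma diag_conj_nonneg_s17 {p : ℕ} (Q W : Matrix (Fin p) (Fin p) ℝ)
    (hs : Q.IsSymm) (hi : Q * Q = Q) (j : Fin p) : 0 ≤ (Wᵀ * Q * W) j j := by
  have hfac : Wᵀ * Q * W = (Q * W)ᵀ * (Q * W) := by
    rw [Matrix.transpose_mul, hs.eq]
    calc Wᵀ * Q * W = Wᵀ * (Q * Q * W) := by rw [hi, Matrix.mul_assoc]
      _ = Wᵀ * Q * (Q * W) := by simp only [Matrix.mul_assoc]
  rw [hfac, Matrix.mul_apply]
  apply Finset.sum_nonneg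
  intro i _
  rw [Matrix.transpose_apply]
  exact mul_self_nonneg _

/-- Abel-summation style majorization bound. -/
lemma maj_ineq {p : ℕ} (ν t : Fin p → ℝ) (hsort : ∀ i j : Fin p, i ≤ j → ν j ≤ ν i)
    (ht0 : ∀ j, 0 ≤ t j) (ht1 : ∀ j, t j ≤ 1) (m : ℕ) (hm : m < p)
    (hsum : ∑ j, t j = (m : ℝ)) :
    ∑ j, ν j * t j ≤ ∑ j ∈ Finset.univ.filter (fun j : Fin p => (j : ℕ) < m), ν j := by
  set c := ν ⟨m, hm⟩ with hc
  have hcard : (Finset.univ.filter (fun j : Fin p => (j : ℕ) < m)).card = m := by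
    have hfilter : Finset.univ.filter (fun j : Fin p => (j : ℕ) < m)
        = Finset.Iio (⟨m, hm⟩ : Fin p) := by
      ext j; simp [Finset.mem_Iio, Fin.lt_def]
    rw [hfilter, Fin.card_Iio]
  have key : ∀ j : Fin p, ν j * t j ≤
      (if (j : ℕ) < m then ν j else 0) + c * (t j - if (j : ℕ) < m then 1 else 0) := by
    intro j
    by_cases h : (j : ℕ) < m
    · have hνc : c ≤ ν j := hsort j ⟨m, hm⟩ (by simpa [Fin.le_def] using le_of_lt h)
      simp only [h, if_pos]
      nlinarith [ht1 j]
    · have hνc : ν j ≤ c := hsort ⟨m, hm⟩ j (by simpa [Fin.le_def] using not_lt.mp h)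
      simp only [h, if_neg, not_false_iff]
      nlinarith [ht0 j]
  have hA : ∑ j : Fin p, (if (j : ℕ) < m then ν j else 0)
      = ∑ j ∈ Finset.univ.filter (fun j : Fin p => (j : ℕ) < m), ν j :=
    (Finset.sum_filter _ _).symm
  have hB : ∑ j : Fin p, (if (j : ℕ) < m then (1 : ℝ) else 0)
      = ((Finset.univ.filter (fun j : Fin p => (j : ℕ) < m)).card : ℝ) := by
    rw [Finset.sum_boole]
  calc ∑ j, ν j * t j
      ≤ ∑ j : Fin p, ((if (j : ℕ) < m then ν j else 0)
          + c * (t j - if (j : ℕ) < m then 1 else 0)) :=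
        Finset.sum_le_sum fun j _ => key j
    _ = (∑ j : Fin p, (if (j : ℕ) < m then ν j else 0))
        + c * ((∑ j, t j) - ∑ j : Fin p, (if (j : ℕ) < m then (1 : ℝ) else 0)) := by
        rw [Finset.sum_add_distrib, ← Finset.mul_sum, Finset.sum_sub_distrib]
    _ = ∑ j ∈ Finset.univ.filter (fun j : Fin p => (j : ℕ) < m), ν j := by
        rw [hA, hB, hcard, hsum]; ring

/-- Ky Fan-type bound: the trace of a rank-`m` orthogonal projection against a
symmetric matrix is at most the sum of the `m` largest eigenvalues. -/
lemma kyFan {p : ℕ} (ν : Fin p → ℝ) (W P : Matrix (Fin p) (Fin p) ℝ)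
    (hW : Wᵀ * W = 1) (hsort : ∀ i j : Fin p, i ≤ j → ν j ≤ ν i)
    (hs : P.IsSymm) (hi : P * P = P) (m : ℕ) (hm : m < p) (htr : Matrix.trace P = (m : ℝ)) :
    Matrix.trace (P * (W * Matrix.diagonal ν * Wᵀ)) ≤
      ∑ j ∈ Finset.univ.filter (fun j : Fin p => (j : ℕ) < m), ν j := by
  set t : Fin p → ℝ := fun j => (Wᵀ * P * W) j j with ht
  have hWW : W * Wᵀ = 1 := mul_eq_one_comm.mp hW
  have h1 : Matrix.trace (P * (W * Matrix.diagonal ν * Wᵀ)) = ∑ j, ν j * t j := by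
    have h2 : P * (W * Matrix.diagonal ν * Wᵀ) = (P * W * Matrix.diagonal ν) * Wᵀ := by
      simp [Matrix.mul_assoc]
    rw [h2, Matrix.trace_mul_comm, ← Matrix.mul_assoc, ← Matrix.mul_assoc]
    simp only [Matrix.trace, Matrix.diag, Matrix.mul_diagonal, ht]
    exact Finset.sum_congr rfl fun j _ => mul_comm _ _
  have ht0 : ∀ j, 0 ≤ t j := fun j => diag_conj_nonneg_s17 P W hs hi j
  have ht1 : ∀ j, t j ≤ 1 := by
    intro j
    have hQs : (1 - P).IsSymm := by
      rw [Matrix.IsSymm, Matrix.transpose_sub, Matrix.transpose_one, hs.eq]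
    have hQi : (1 - P) * (1 - P) = 1 - P := by
      simp only [Matrix.mul_sub, Matrix.sub_mul, Matrix.mul_one, Matrix.one_mul, hi]
      abel
    have hnn := diag_conj_nonneg_s17 (1 - P) W hQs hQi j
    have he : (Wᵀ * (1 - P) * W) j j = 1 - t j := by
      have hWWjj : (Wᵀ * W) j j = 1 := by rw [hW]; simp [Matrix.one_apply]
      rw [Matrix.mul_sub, Matrix.mul_one, Matrix.sub_mul, Matrix.sub_apply, hWWjj]
    rw [he] at hnn
    linarith
  have hsum : ∑ j, t j = (m : ℝ) := by
    have h3 : ∑ j, t j = Matrix.trace (Wᵀ * P * W) := rfl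
    rw [h3, Matrix.trace_mul_comm, ← Matrix.mul_assoc, hWW, Matrix.one_mul, htr]
  rw [h1]
  exact maj_ineq ν t hsort ht0 ht1 m hm hsum

/-- For orthonormal `W`, `tr(w_j w_jᵀ · W diag(ν) Wᵀ) = ν j`. -/
lemma colOuter_trace_eig {p : ℕ} (ν : Fin p → ℝ) (W : Matrix (Fin p) (Fin p) ℝ)
    (hW : Wᵀ * W = 1) (j : Fin p) :
    Matrix.trace (colOuter W j * (W * Matrix.diagonal ν * Wᵀ)) = ν j := by
  have horth : ∀ b c : Fin p, (∑ a, W a b * W a c) = if b = c then 1 else 0 := by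
    intro b c
    have h := congr_fun (congr_fun hW b) c
    simpa [Matrix.mul_apply, Matrix.transpose_apply, Matrix.one_apply] using h
  have hkey : colOuter W j * (W * Matrix.diagonal ν * Wᵀ) = ν j • colOuter W j := by
    ext i k
    simp only [colOuter, Matrix.mul_apply, Matrix.vecMulVec_apply, Matrix.diagonal_apply,
      Matrix.transpose_apply, Matrix.smul_apply, smul_eq_mul, mul_ite, ite_mul, mul_zero,
      zero_mul, Finset.sum_ite_eq, Finset.sum_ite_eq', Finset.mem_univ, if_pos]
    calc ∑ a, W i j * W a j * (∑ b, W a b * ν b * W k b)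
        = ∑ a, ∑ b, W i j * W a j * (W a b * ν b * W k b) := by
          simp only [Finset.mul_sum]
      _ = ∑ b, ∑ a, W i j * W a j * (W a b * ν b * W k b) := Finset.sum_comm
      _ = ∑ b, (W i j * ν b * W k b) * (∑ a, W a j * W a b) := by
          refine Finset.sum_congr rfl fun b _ => ?_
          rw [Finset.mul_sum]
          exact Finset.sum_congr rfl fun a _ => by ring
      _ = ν j * (W i j * W k j) := by
          simp only [horth, mul_ite, mul_one, mul_zero, Finset.sum_ite_eq, Finset.mem_univ,
            if_pos]
          ring
  rw [hkey, Matrix.trace_smul, smul_eq_mul]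
  have htr1 : Matrix.trace (colOuter W j) = 1 := by
    simp only [colOuter, Matrix.trace, Matrix.diag, Matrix.vecMulVec_apply]
    simpa using horth j j
  rw [htr1, mul_one]

/-- for positive semidefinite `A, B` with `rank B > p − q_d`, if `ρ*`
is a root of `f(ρ) = ∑ₖ ∑_{j=1}^{q_k} λ_j(A − ρB)` (witnessed by a sorted
eigendecomposition `A − ρ* B = W diag(ν) Wᵀ`), then every flag of signature
`(p, q_{1:d})` satisfies `∑ₖ tr(Π_{S_k} A) ≤ ρ* ∑ₖ tr(Π_{S_k} B)`, with equality for
the eigenflag of `A − ρ* B`; consequently `ρ*` is the maximum of the flag trace ratio,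
attained at the eigenflag of `A − ρ* B`. -/
theorem flag_trace_ratio_maximum
    {p d : ℕ} (hd : 1 ≤ d)
    (q : ℕ → ℕ) (hq1 : 0 < q 1)
    (hmono : ∀ k, 1 ≤ k → k < d → q k < q (k + 1)) (hqd : q d < p)
    (A B : Matrix (Fin p) (Fin p) ℝ)
    (hA : A.PosSemidef) (hB : B.PosSemidef)
    (hrank : p - q d < B.rank)
    (ρ : ℝ) (ν : Fin p → ℝ) (W : Matrix (Fin p) (Fin p) ℝ)
    (hW : Wᵀ * W = 1)
    (hsort : ∀ i j : Fin p, i ≤ j → ν j ≤ ν i)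
    (hdecomp : A - ρ • B = W * Matrix.diagonal ν * Wᵀ)
    (hroot : ∑ k ∈ Finset.Icc 1 d,
        ∑ j ∈ Finset.univ.filter (fun j : Fin p => (j : ℕ) < q k), ν j = 0)
    (P : ℕ → Matrix (Fin p) (Fin p) ℝ)
    (hP : IsProjFlag p d q P) :
    (∑ k ∈ Finset.Icc 1 d, Matrix.trace (P k * A)
        ≤ ρ * ∑ k ∈ Finset.Icc 1 d, Matrix.trace (P k * B)) ∧
    (∑ k ∈ Finset.Icc 1 d, Matrix.trace (leadProj W (q k) * A)
        = ρ * ∑ k ∈ Finset.Icc 1 d, Matrix.trace (leadProj W (q k) * B)) ∧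
    (0 < ∑ k ∈ Finset.Icc 1 d, Matrix.trace (P k * B) →
      (∑ k ∈ Finset.Icc 1 d, Matrix.trace (P k * A)) /
          (∑ k ∈ Finset.Icc 1 d, Matrix.trace (P k * B)) ≤ ρ) ∧
    (0 < ∑ k ∈ Finset.Icc 1 d, Matrix.trace (leadProj W (q k) * B) →
      (∑ k ∈ Finset.Icc 1 d, Matrix.trace (leadProj W (q k) * A)) /
          (∑ k ∈ Finset.Icc 1 d, Matrix.trace (leadProj W (q k) * B)) = ρ) := by
  obtain ⟨hPsymm, hPidem, hPrank, hPnest⟩ := hP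
  -- `q k < p` for `k ∈ [1, d]`
  have hqle : ∀ l, l ≤ d → ∀ k, 1 ≤ k → k ≤ l → q k ≤ q l := by
    intro l
    induction l with
    | zero => intro _ k hk hkl; omega
    | succ n ih =>
      intro hld k hk hkl
      rcases Nat.lt_succ_iff_lt_or_eq.mp (Nat.lt_succ_of_le hkl) with h | h
      · have hkn : k ≤ n := by omega
        have h1n : 1 ≤ n := le_trans hk hkn
        have := ih (by omega) k hk hkn
        have := hmono n h1n (by omega)
        omega
      · subst h; exact le_rfl
  have hqp : ∀ k, 1 ≤ k → k ≤ d → q k < p := by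
    intro k hk hkd
    exact lt_of_le_of_lt (hqle d le_rfl k hk hkd) hqd
  -- trace splitting
  have hsplit : ∀ Q : Matrix (Fin p) (Fin p) ℝ,
      Matrix.trace (Q * (W * Matrix.diagonal ν * Wᵀ))
        = Matrix.trace (Q * A) - ρ * Matrix.trace (Q * B) := by
    intro Q
    rw [← hdecomp, Matrix.mul_sub, Matrix.trace_sub, Matrix.mul_smul, Matrix.trace_smul,
      smul_eq_mul]
  -- Part 1
  have h1 : ∑ k ∈ Finset.Icc 1 d, Matrix.trace (P k * A)
      - ρ * ∑ k ∈ Finset.Icc 1 d, Matrix.trace (P k * B) ≤ 0 := by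
    rw [Finset.mul_sum, ← Finset.sum_sub_distrib]
    calc ∑ k ∈ Finset.Icc 1 d,
            (Matrix.trace (P k * A) - ρ * Matrix.trace (P k * B))
        = ∑ k ∈ Finset.Icc 1 d, Matrix.trace (P k * (W * Matrix.diagonal ν * Wᵀ)) :=
          Finset.sum_congr rfl fun k _ => (hsplit (P k)).symm
      _ ≤ ∑ k ∈ Finset.Icc 1 d,
            ∑ j ∈ Finset.univ.filter (fun j : Fin p => (j : ℕ) < q k), ν j := by
          refine Finset.sum_le_sum fun k hk => ?_
          obtain ⟨hk1, hkd⟩ := Finset.mem_Icc.mp hk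
          refine kyFan ν W (P k) hW hsort (hPsymm k hk1 hkd) (hPidem k hk1 hkd) (q k)
            (hqp k hk1 hkd) ?_
          rw [trace_eq_rank_of_symm_idem (P k) (hPsymm k hk1 hkd) (hPidem k hk1 hkd),
            hPrank k hk1 hkd]
      _ = 0 := hroot
  -- Part 2
  have hlead : ∀ m : ℕ, Matrix.trace (leadProj W m * (W * Matrix.diagonal ν * Wᵀ))
      = ∑ j ∈ Finset.univ.filter (fun j : Fin p => (j : ℕ) < m), ν j := by
    intro m
    unfold leadProj
    rw [Matrix.sum_mul, Matrix.trace_sum]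
    exact Finset.sum_congr rfl fun j _ => colOuter_trace_eig ν W hW j
  have h2 : ∑ k ∈ Finset.Icc 1 d, Matrix.trace (leadProj W (q k) * A)
      - ρ * ∑ k ∈ Finset.Icc 1 d, Matrix.trace (leadProj W (q k) * B) = 0 := by
    rw [Finset.mul_sum, ← Finset.sum_sub_distrib]
    calc ∑ k ∈ Finset.Icc 1 d,
            (Matrix.trace (leadProj W (q k) * A) - ρ * Matrix.trace (leadProj W (q k) * B))
        = ∑ k ∈ Finset.Icc 1 d,
            Matrix.trace (leadProj W (q k) * (W * Matrix.diagonal ν * Wᵀ)) :=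
          Finset.sum_congr rfl fun k _ => (hsplit (leadProj W (q k))).symm
      _ = ∑ k ∈ Finset.Icc 1 d,
            ∑ j ∈ Finset.univ.filter (fun j : Fin p => (j : ℕ) < q k), ν j :=
          Finset.sum_congr rfl fun k _ => hlead (q k)
      _ = 0 := hroot
  refine ⟨by linarith, by linarith, ?_, ?_⟩
  · intro hpos
    rw [div_le_iff₀ hpos]
    linarith
  · intro hpos
    rw [div_eq_iff (ne_of_gt hpos)]
    linarith
end

section
/- Let L ∈ ℝ^{n×n} be symmetric, β ∈ ℝ, let S_1 ⊆ ... ⊆ S_d be a flag of subspaces of ℝ^n of signature (n, q_{1:d}), and let U = [U_1 ⋯ U_{d+1}] ∈ O(n) be an orthogonal representative. Then ⟨(1/d) Σ_{k=1}^d Π_{S_k}, L⟩_F + β ‖(1/d) Σ_{k=1}^d Π_{S_k}‖_1 = (1/d) · ( Σ_{k=1}^d (d − (k−1)) tr(U_kᵀ L U_k) + β ‖Σ_{k=1}^d (d − (k−1)) U_k U_kᵀ‖_1 ), where ⟨M, N⟩_F = tr(Mᵀ N) and ‖M‖_1 = Σ_{i,j} |M_{ij}| is the entrywise ℓ¹ norm.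 -/
open Matrix Finset

/-- The matrix `U_l U_lᵀ`, where `U_l` is the `l`-th block of columns of `U`
(columns `j` with `q (l-1) ≤ j < q l`, 0-indexed). -/
noncomputable def blockOuter {p : ℕ} (U : Matrix (Fin p) (Fin p) ℝ) (q : ℕ → ℕ) (l : ℕ) :
    Matrix (Fin p) (Fin p) ℝ :=
  ∑ j ∈ Finset.univ.filter (fun j : Fin p => q (l - 1) ≤ (j : ℕ) ∧ (j : ℕ) < q l),
    colOuter U j

/-- The entrywise ℓ¹ norm of a matrix. -/
noncomputable def l1Norm {n : ℕ} (M : Matrix (Fin n) (Fin n) ℝ) : ℝ :=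
  ∑ i, ∑ j, |M i j|

/-- The quadratic form `u_jᵀ L u_j` of the `j`-th column of `U`. -/
noncomputable def colQuad {n : ℕ} (L U : Matrix (Fin n) (Fin n) ℝ) (j : Fin n) : ℝ :=
  ∑ i, ∑ i', U i j * L i i' * U i' j

lemma l1Norm_smul_nonneg {n : ℕ} (c : ℝ) (hc : 0 ≤ c) (M : Matrix (Fin n) (Fin n) ℝ) :
    l1Norm (c • M) = c * l1Norm M := by
  simp [l1Norm, Matrix.smul_apply, smul_eq_mul, abs_mul, abs_of_nonneg hc, Finset.mul_sum]

lemma trace_colOuter_mul {n : ℕ} (L U : Matrix (Fin n) (Fin n) ℝ) (j : Fin n) :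
    Matrix.trace ((colOuter U j)ᵀ * L) = colQuad L U j := by
  simp only [colOuter, colQuad, Matrix.trace, Matrix.diag, Matrix.mul_apply,
    Matrix.transpose_apply, Matrix.vecMulVec_apply]
  rw [Finset.sum_comm]
  exact Finset.sum_congr rfl fun i _ => Finset.sum_congr rfl fun i' _ => by ring

lemma leadProj_split {p : ℕ} (V : Matrix (Fin p) (Fin p) ℝ) (m₁ m₂ : ℕ) (h : m₁ ≤ m₂) :
    leadProj V m₂ = leadProj V m₁ +
      ∑ j ∈ Finset.univ.filter (fun j : Fin p => m₁ ≤ (j : ℕ) ∧ (j : ℕ) < m₂), colOuter V j := by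
  unfold leadProj
  rw [← Finset.sum_filter_add_sum_filter_not
      (Finset.univ.filter (fun j : Fin p => (j : ℕ) < m₂)) (fun j => (j : ℕ) < m₁)]
  congr 1
  · apply Finset.sum_congr _ (fun _ _ => rfl)
    ext j; simp only [Finset.mem_filter, Finset.mem_univ, true_and]; omega
  · apply Finset.sum_congr _ (fun _ _ => rfl)
    ext j; simp only [Finset.mem_filter, Finset.mem_univ, true_and]; omega

/-- Flag trick for sparse spectral clustering: for symmetric `L`, `β ∈ ℝ`
and an orthogonal representative `U = [U_1 ⋯ U_{d+1}]` of a flag of signature `(n, q_{1:d})`,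
`⟨(1/d) ∑ₖ Π_{S_k}, L⟩_F + β ‖(1/d) ∑ₖ Π_{S_k}‖₁`
`= (1/d) (∑ₖ (d − (k−1)) tr(U_kᵀ L U_k) + β ‖∑ₖ (d − (k−1)) U_k U_kᵀ‖₁)`. -/
theorem flag_sparse_spectral_clustering_formula
    {n d : ℕ} (hd : 1 ≤ d)
    (q : ℕ → ℕ) (hq0 : q 0 = 0) (hq1 : 0 < q 1)
    (hmono : ∀ k, 1 ≤ k → k < d → q k < q (k + 1)) (hqd : q d < n)
    (hqtop : q (d + 1) = n)
    (L : Matrix (Fin n) (Fin n) ℝ) (hL : L.IsSymm) (β : ℝ)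
    (P : ℕ → Matrix (Fin n) (Fin n) ℝ) (hP : IsProjFlag n d q P)
    (U : Matrix (Fin n) (Fin n) ℝ) (hU : Uᵀ * U = 1)
    (hrep : ∀ k, 1 ≤ k → k ≤ d → P k = leadProj U (q k)) :
    Matrix.trace ((((1 : ℝ) / d) • ∑ k ∈ Finset.Icc 1 d, P k)ᵀ * L)
        + β * l1Norm (((1 : ℝ) / d) • ∑ k ∈ Finset.Icc 1 d, P k)
      = ((1 : ℝ) / d) *
          ((∑ k ∈ Finset.Icc 1 d, ((d : ℝ) - ((k : ℝ) - 1)) *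
              ∑ j ∈ Finset.univ.filter
                  (fun j : Fin n => q (k - 1) ≤ (j : ℕ) ∧ (j : ℕ) < q k),
                colQuad L U j)
            + β * l1Norm (∑ k ∈ Finset.Icc 1 d,
                ((d : ℝ) - ((k : ℝ) - 1)) • blockOuter U q k)) := by
  -- leadProj decomposition
  have hlead : ∀ k, k ≤ d → leadProj U (q k) = ∑ l ∈ Finset.Icc 1 k, blockOuter U q l := by
    intro k
    induction k with
    | zero =>
      intro _
      simp [leadProj, hq0, Finset.filter_false_of_mem]
    | succ k ih =>
      intro hk1
      have hk : k ≤ d := Nat.le_of_succ_le hk1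
      have hle : q k ≤ q (k + 1) := by
        rcases Nat.eq_zero_or_pos k with h0 | hpos
        · subst h0; rw [hq0]; exact Nat.zero_le _
        · exact (hmono k hpos (by omega)).le
      rw [leadProj_split U (q k) (q (k+1)) hle, ih hk,
        Finset.sum_Icc_succ_top (by omega : 1 ≤ k + 1)]
      congr 1
  -- the main algebraic identity for the sum of projections
  have hA : (∑ k ∈ Finset.Icc 1 d, P k)
      = ∑ k ∈ Finset.Icc 1 d, ((d : ℝ) - ((k : ℝ) - 1)) • blockOuter U q k := by
    have h1 : (∑ k ∈ Finset.Icc 1 d, P k)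
        = ∑ k ∈ Finset.Icc 1 d, ∑ l ∈ Finset.Icc 1 k, blockOuter U q l := by
      refine Finset.sum_congr rfl fun k hk => ?_
      rw [Finset.mem_Icc] at hk
      rw [hrep k hk.1 hk.2, hlead k hk.2]
    rw [h1]
    have h2 : ∀ k ∈ Finset.Icc 1 d,
        (∑ l ∈ Finset.Icc 1 k, blockOuter U q l)
          = ∑ l ∈ Finset.Icc 1 d, if l ≤ k then blockOuter U q l else 0 := by
      intro k hk
      rw [Finset.mem_Icc] at hk
      rw [← Finset.sum_filter]
      apply Finset.sum_congr _ (fun _ _ => rfl)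
      ext l; simp only [Finset.mem_filter, Finset.mem_Icc]; omega
    rw [Finset.sum_congr rfl h2, Finset.sum_comm]
    refine Finset.sum_congr rfl fun l hl => ?_
    rw [Finset.mem_Icc] at hl
    rw [← Finset.sum_filter]
    have hfc : (Finset.Icc 1 d).filter (fun k => l ≤ k) = Finset.Icc l d := by
      ext k; simp only [Finset.mem_filter, Finset.mem_Icc]; omega
    rw [Finset.sum_const, hfc, Nat.card_Icc]
    rw [← Nat.cast_smul_eq_nsmul ℝ]
    congr 1
    have : ((d + 1 - l : ℕ) : ℝ) = (d : ℝ) + 1 - l := by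
      have : l ≤ d + 1 := by omega
      push_cast [Nat.cast_sub this]
      ring
    rw [this]; ring
  rw [hA]
  set A := ∑ k ∈ Finset.Icc 1 d, ((d : ℝ) - ((k : ℝ) - 1)) • blockOuter U q k with hAdef
  have htr : Matrix.trace (Aᵀ * L)
      = ∑ k ∈ Finset.Icc 1 d, ((d : ℝ) - ((k : ℝ) - 1)) *
          ∑ j ∈ Finset.univ.filter
              (fun j : Fin n => q (k - 1) ≤ (j : ℕ) ∧ (j : ℕ) < q k),
            colQuad L U j := by
    rw [hAdef, Matrix.transpose_sum, Finset.sum_mul, Matrix.trace_sum]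
    refine Finset.sum_congr rfl fun k _ => ?_
    rw [Matrix.transpose_smul, Matrix.smul_mul, Matrix.trace_smul, smul_eq_mul]
    congr 1
    rw [blockOuter, Matrix.transpose_sum, Finset.sum_mul, Matrix.trace_sum]
    exact Finset.sum_congr rfl fun j _ => trace_colOuter_mul L U j
  have hdpos : (0:ℝ) < d := by exact_mod_cast hd
  rw [Matrix.transpose_smul, Matrix.smul_mul, Matrix.trace_smul, smul_eq_mul, htr,
    l1Norm_smul_nonneg _ (by positivity)]
  ring
end
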